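/- arXiv:2002.04483 — 5 statements merged into one kernel-verified Lean document; each statement's English description precedes it below -/
import Mathlib

section
/- Let 𝒜 be a complex unital Banach algebra (for instance the algebra of bounded linear operators on a complex Banach space), let a, b ∈ 𝒜, and let T > 0. Then there exists a constant C ≥ 0 such that for every natural number n ≥ 1, sup_{τ ∈ [0,T]} ‖(exp(−(τ/n)·a) · exp(−(τ/n)·b))^n − exp(−τ·(a+b))‖ ≤ C/n. In particular the Lie product formula exp(−τ(a+b)) = lim_{n→∞} (exp(−τa/n)exp(−τb/n))^n holds in norm, uniformly in τ ∈ [0,T], with convergence rate O(1/n). -/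
/-!
Put `S = exp x * exp y` and `U = exp (x + y)` with `‖x‖, ‖y‖ ≤ r`. Their second-order expansions
around `1` agree, so `‖S - U‖ = O(r²)`, while `‖S‖, ‖U‖ ≤ exp (2r)`; telescoping
`S ^ n - U ^ n = ∑ S ^ k (S - U) U ^ (n - 1 - k)` gives `‖S ^ n - U ^ n‖ ≤ 7 n r² exp (2nr)`.
For `x = -(τ/n) a`, `y = -(τ/n) b` we have `U ^ n = exp (-τ (a + b))` and `r = τ (‖a‖ + ‖b‖) / n`,
so the error is `O(1/n)` uniformly for `τ ∈ [0, T]`. The bound `‖exp x‖ ≤ exp ‖x‖` needs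
`‖1‖ = 1`, which is arranged by passing to the left regular representation `𝔸 → (𝔸 →L 𝔸)`.
-/

open NormedSpace
open scoped Nat
open Finset

theorem norm_pow_sub_pow_le {R : Type*} [NormedRing R] [NormOneClass R] {x y : R} {M : ℝ}
    (hx : ‖x‖ ≤ M) (hy : ‖y‖ ≤ M) (n : ℕ) :
    ‖x ^ n - y ^ n‖ ≤ n * M ^ (n - 1) * ‖x - y‖ := by
  induction n with
  | zero => simp
  | succ n ih =>
    have hyn : ‖y ^ n‖ ≤ M ^ n := (norm_pow_le y n).trans (by gcongr)
    calc ‖x ^ (n + 1) - y ^ (n + 1)‖ = ‖x * (x ^ n - y ^ n) + (x - y) * y ^ n‖ := by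
          rw [pow_succ', pow_succ']; congr 1; noncomm_ring
      _ ≤ ‖x‖ * ‖x ^ n - y ^ n‖ + ‖x - y‖ * ‖y ^ n‖ :=
          norm_add_le_of_le (norm_mul_le _ _) (norm_mul_le _ _)
      _ ≤ M * (n * M ^ (n - 1) * ‖x - y‖) + ‖x - y‖ * M ^ n := by
          have hM : 0 ≤ M := (norm_nonneg x).trans hx
          gcongr
      _ = (n + 1 : ℕ) * M ^ (n + 1 - 1) * ‖x - y‖ := by
          rcases n with _ | n
          · simp
          · push_cast; ring

namespace ContinuousLinearMap

variable (𝕜 𝔸 : Type*) [NontriviallyNormedField 𝕜] [NormedRing 𝔸] [NormedAlgebra 𝕜 𝔸]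

noncomputable def mulAlgHom : 𝔸 →ₐ[𝕜] 𝔸 →L[𝕜] 𝔸 :=
  AlgHom.ofLinearMap (mul 𝕜 𝔸).toLinearMap (by ext; simp) (fun x y => by ext; simp [mul_assoc])

end ContinuousLinearMap

namespace NormedSpace

variable {𝔸 : Type*} [NormedRing 𝔸] [NormedAlgebra ℚ 𝔸] [CompleteSpace 𝔸]

section NormOneClass

variable [NormOneClass 𝔸]

theorem norm_exp_sub_sum_le (x : 𝔸) (k : ℕ) :
    ‖exp x - ∑ m ∈ range k, (m !⁻¹ : ℚ) • x ^ m‖ ≤ ‖x‖ ^ k * Real.exp ‖x‖ := by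
  have hrem := (hasSum_nat_add_iff' k).2 (exp_series_hasSum_exp' (𝕂 := ℚ) x)
  have hmaj : HasSum (fun i : ℕ => ‖x‖ ^ k * (‖x‖ ^ i / i !)) (‖x‖ ^ k * Real.exp ‖x‖) := by
    rw [Real.exp_eq_exp_ℝ]
    exact (expSeries_div_hasSum_exp ‖x‖).mul_left _
  refine hrem.norm_le_of_bounded hmaj fun i => ?_
  have hfact : (((i + k)! : ℝ))⁻¹ ≤ ((i ! : ℝ))⁻¹ := by
    gcongr
    omega
  calc ‖(((i + k)! : ℚ))⁻¹ • x ^ (i + k)‖ = (((i + k)! : ℝ))⁻¹ * ‖x ^ (i + k)‖ := by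
        simp [norm_smul, ← Rat.norm_cast_real]
    _ ≤ ((i ! : ℝ))⁻¹ * ‖x‖ ^ (i + k) := by gcongr; exact norm_pow_le x _
    _ = ‖x‖ ^ k * (‖x‖ ^ i / i !) := by ring

theorem norm_exp_le (x : 𝔸) : ‖exp x‖ ≤ Real.exp ‖x‖ := by
  simpa using norm_exp_sub_sum_le x 0

theorem norm_exp_sub_one_le (x : 𝔸) : ‖exp x - 1‖ ≤ ‖x‖ * Real.exp ‖x‖ := by
  simpa using norm_exp_sub_sum_le x 1

theorem norm_exp_sub_one_sub_le (x : 𝔸) : ‖exp x - 1 - x‖ ≤ ‖x‖ ^ 2 * Real.exp ‖x‖ := by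
  simpa [sum_range_succ, sub_sub] using norm_exp_sub_sum_le x 2

theorem norm_exp_mul_exp_sub_exp_add_le {x y : 𝔸} {r : ℝ} (hx : ‖x‖ ≤ r) (hy : ‖y‖ ≤ r) :
    ‖exp x * exp y - exp (x + y)‖ ≤ 7 * r ^ 2 * Real.exp (2 * r) := by
  have hr : 0 ≤ r := (norm_nonneg x).trans hx
  have hxy : ‖x + y‖ ≤ 2 * r := (norm_add_le x y).trans (by linarith)
  have h₁ : ‖exp x - 1 - x‖ * ‖exp y‖ ≤ r ^ 2 * Real.exp (2 * r) := by
    calc _ ≤ (r ^ 2 * Real.exp r) * Real.exp r := by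
          gcongr
          · exact (norm_exp_sub_one_sub_le x).trans (by gcongr)
          · exact (norm_exp_le y).trans (by gcongr)
      _ = r ^ 2 * Real.exp (2 * r) := by rw [mul_assoc, ← Real.exp_add, two_mul]
  have h₂ : ‖x‖ * ‖exp y - 1‖ ≤ r ^ 2 * Real.exp (2 * r) := by
    calc _ ≤ r * (r * Real.exp r) := by
          gcongr
          exact (norm_exp_sub_one_le y).trans (by gcongr)
      _ ≤ r ^ 2 * Real.exp (2 * r) := by rw [← mul_assoc, ← sq]; gcongr; linarith
  have h₃ : ‖exp y - 1 - y‖ ≤ r ^ 2 * Real.exp (2 * r) :=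
    (norm_exp_sub_one_sub_le y).trans (by gcongr; linarith)
  have h₄ : ‖exp (x + y) - 1 - (x + y)‖ ≤ 4 * r ^ 2 * Real.exp (2 * r) :=
    (norm_exp_sub_one_sub_le (x + y)).trans (by
      calc _ ≤ (2 * r) ^ 2 * Real.exp (2 * r) := by gcongr
        _ = _ := by ring)
  have hdecomp : exp x * exp y - exp (x + y) = (exp x - 1 - x) * exp y + x * (exp y - 1)
      + (exp y - 1 - y) - (exp (x + y) - 1 - (x + y)) := by noncomm_ring
  calc _ ≤ ‖exp x - 1 - x‖ * ‖exp y‖ + ‖x‖ * ‖exp y - 1‖ + ‖exp y - 1 - y‖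
          + ‖exp (x + y) - 1 - (x + y)‖ := by
        rw [hdecomp]
        refine (norm_sub_le _ _).trans (add_le_add_left (norm_add_le_of_le ?_ le_rfl) _)
        exact norm_add_le_of_le (norm_mul_le _ _) (norm_mul_le _ _)
    _ ≤ 7 * r ^ 2 * Real.exp (2 * r) := by linarith

theorem norm_exp_mul_exp_pow_sub_exp_add_pow_le {x y : 𝔸} {r : ℝ} (hx : ‖x‖ ≤ r)
    (hy : ‖y‖ ≤ r) (n : ℕ) :
    ‖(exp x * exp y) ^ n - exp (x + y) ^ n‖ ≤ 7 * n * r ^ 2 * Real.exp (2 * n * r) := by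
  have hprod : ‖exp x * exp y‖ ≤ Real.exp (2 * r) := by
    calc _ ≤ Real.exp ‖x‖ * Real.exp ‖y‖ :=
          (norm_mul_le _ _).trans (by gcongr <;> exact norm_exp_le _)
      _ ≤ Real.exp (2 * r) := by rw [← Real.exp_add]; gcongr; linarith
  have hsum : ‖exp (x + y)‖ ≤ Real.exp (2 * r) :=
    (norm_exp_le _).trans (by gcongr; linarith [norm_add_le x y])
  obtain _ | n := n
  · simp
  calc _ ≤ (n + 1 : ℕ) * Real.exp (2 * r) ^ n * (7 * r ^ 2 * Real.exp (2 * r)) := by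
        refine (norm_pow_sub_pow_le hprod hsum (n + 1)).trans ?_
        rw [Nat.add_sub_cancel]
        gcongr
        exact norm_exp_mul_exp_sub_exp_add_le hx hy
    _ = _ := by
        rw [← Real.exp_nat_mul, mul_assoc, mul_comm (Real.exp _), mul_assoc, ← Real.exp_add]
        push_cast; ring_nf

end NormOneClass

theorem norm_exp_mul_exp_pow_sub_exp_add_pow_le' {x y : 𝔸} {r : ℝ} (hx : ‖x‖ ≤ r)
    (hy : ‖y‖ ≤ r) (n : ℕ) :
    ‖(exp x * exp y) ^ n - exp (x + y) ^ n‖ ≤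
      ‖(1 : 𝔸)‖ * (7 * n * r ^ 2 * Real.exp (2 * n * r)) := by
  nontriviality 𝔸
  -- `L` lands in an algebra with `‖1‖ = 1`, and `‖z‖ ≤ ‖L z‖ * ‖1‖` because `L z 1 = z`.
  set L := ContinuousLinearMap.mulAlgHom ℚ 𝔸
  have hL : Continuous L := (ContinuousLinearMap.mul ℚ 𝔸).continuous
  have hLx : ‖L x‖ ≤ r := (ContinuousLinearMap.opNorm_mul_apply_le ℚ 𝔸 x).trans hx
  have hLy : ‖L y‖ ≤ r := (ContinuousLinearMap.opNorm_mul_apply_le ℚ 𝔸 y).trans hy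
  set z := (exp x * exp y) ^ n - exp (x + y) ^ n
  have hLz : L z = (exp (L x) * exp (L y)) ^ n - exp (L x + L y) ^ n := by
    simp [z, map_exp L hL]
  calc ‖z‖ = ‖L z 1‖ := by simp [L, ContinuousLinearMap.mulAlgHom]
    _ ≤ ‖L z‖ * ‖(1 : 𝔸)‖ := (L z).le_opNorm 1
    _ ≤ _ := by
        rw [mul_comm, hLz]
        gcongr
        exact norm_exp_mul_exp_pow_sub_exp_add_pow_le hLx hLy n

end NormedSpace

theorem lie_trotter_bounded_rate_general
    (𝒜 : Type*) [NormedRing 𝒜] [NormedAlgebra ℂ 𝒜] [CompleteSpace 𝒜]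
    (a b : 𝒜) (T : ℝ) :
    ∃ C : ℝ, 0 ≤ C ∧ ∀ n : ℕ, 1 ≤ n → ∀ τ ∈ Set.Icc (0 : ℝ) T,
      ‖(exp ((-(τ / n) : ℂ) • a) * exp ((-(τ / n) : ℂ) • b)) ^ n
          - exp ((-τ : ℂ) • (a + b))‖ ≤ C / n := by
  let _ : NormedAlgebra ℚ 𝒜 := .restrictScalars ℚ ℂ 𝒜
  set A := ‖a‖ + ‖b‖
  refine ⟨‖(1 : 𝒜)‖ * (7 * (T * A) ^ 2 * Real.exp (2 * T * A)), by positivity,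
    fun n hn τ ⟨hτ0, hτT⟩ => ?_⟩
  have hn : (0 : ℝ) < n := by exact_mod_cast hn
  have hnorm (c : 𝒜) : ‖(-(τ / n) : ℂ) • c‖ = τ / n * ‖c‖ := by
    simp [norm_smul, abs_of_nonneg hτ0]
  have hx : ‖(-(τ / n) : ℂ) • a‖ ≤ τ / n * A := by
    rw [hnorm]; gcongr; linarith [norm_nonneg b]
  have hy : ‖(-(τ / n) : ℂ) • b‖ ≤ τ / n * A := by
    rw [hnorm]; gcongr; linarith [norm_nonneg a]
  have hpow : exp ((-τ : ℂ) • (a + b)) = exp ((-(τ / n) : ℂ) • a + (-(τ / n) : ℂ) • b) ^ n := by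
    rw [← smul_add, ← exp_nsmul, ← Nat.cast_smul_eq_nsmul ℂ, smul_smul]
    congr 2
    field_simp [show (n : ℂ) ≠ 0 by exact_mod_cast hn.ne']
  rw [hpow, mul_div_assoc]
  refine (norm_exp_mul_exp_pow_sub_exp_add_pow_le' hx hy n).trans ?_
  gcongr
  calc 7 * n * (τ / n * A) ^ 2 * Real.exp (2 * n * (τ / n * A))
      = 7 * (τ * A) ^ 2 * Real.exp (2 * τ * A) / n := by field_simp
    _ ≤ _ := by gcongr

/-- **Lie product formula with rate `O(1/n)` in a Banach algebra.**
For elements `a, b` of a complex unital Banach algebra and any `T > 0`, there is a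
constant `C ≥ 0` such that for all `n ≥ 1`,
`sup_{τ ∈ [0,T]} ‖(exp(−(τ/n)a) exp(−(τ/n)b))^n − exp(−τ(a+b))‖ ≤ C/n`. -/
theorem lie_trotter_bounded_rate
    (𝒜 : Type*) [NormedRing 𝒜] [NormedAlgebra ℂ 𝒜] [CompleteSpace 𝒜]
    (a b : 𝒜) (T : ℝ) (hT : 0 < T) :
    ∃ C : ℝ, 0 ≤ C ∧ ∀ n : ℕ, 1 ≤ n → ∀ τ ∈ Set.Icc (0 : ℝ) T,
      ‖(exp ((-(τ / n) : ℂ) • a) * exp ((-(τ / n) : ℂ) • b)) ^ n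
          - exp ((-τ : ℂ) • (a + b))‖ ≤ C / n :=
  lie_trotter_bounded_rate_general 𝒜 a b T
end

section
/- Let (δ_n)_{n≥1} be a sequence of positive real numbers with δ_n → 0 as n → ∞. Then there exists a continuous function q : [0,1] → ℝ such that limsup_{n→∞} ( sup_{(t,s)∈Δ} |D_n(q;t,s)| ) / δ_n = ∞; that is, the uniform Riemann-sum approximation error of q over all subintervals of [0,1] tends to zero more slowly than any prescribed rate. -/
/-!
Take the lacunary cosine series `q x = ∑ⱼ 2⁻ʲ cos (2π 2^{m j} x)` with `m` strictly increasing;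
it is continuous, bounded by `2`, and `∫₀¹ q = 0`. With `n = 2^{m k}` nodes on `[0, 1]` the
terms with `j < k` have frequencies that are not multiples of `n`, so their cosines sum to zero
over the nodes, while the terms with `j ≥ k` are identically `1` on the nodes. Hence
`D_n(q; 1, 0) = -2·2⁻ᵏ` exactly. Since `δ → 0`, `m` can be chosen to grow so fast that
`2ᵏ δ(2^{m k}) < 2·2⁻ᵏ`, and then the ratio exceeds `2ᵏ` along `n = 2^{m k}`.
-/

open intervalIntegral Finset Filter

/-- The left-endpoint Riemann sum `R_n(q;t,s) = ((t−s)/n)·Σ_{k<n} q(s + k(t−s)/n)`. -/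
noncomputable def riemannSum (q : ℝ → ℝ) (n : ℕ) (t s : ℝ) : ℝ :=
  ((t - s) / n) * ∑ k ∈ Finset.range n, q (s + k * (t - s) / n)

/-- The error `D_n(q;t,s) = ∫_s^t q − R_n(q;t,s)`. -/
noncomputable def intError (q : ℝ → ℝ) (n : ℕ) (t s : ℝ) : ℝ :=
  (∫ y in s..t, q y) - riemannSum q n t s

/-- `sup_{(t,s) ∈ Δ} |D_n(q;t,s)|`, the supremum of the Riemann-sum error over
the triangle `Δ = {(t,s) : 0 ≤ s ≤ t ≤ 1}`. -/
noncomputable def supError (q : ℝ → ℝ) (n : ℕ) : ℝ :=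
  ⨆ p : {p : ℝ × ℝ // 0 ≤ p.2 ∧ p.2 ≤ p.1 ∧ p.1 ≤ 1}, |intError q n p.1.1 p.1.2|

open Real

theorem sum_range_cos_two_pi_mul_div (N M : ℕ) (hN : N ≠ 0) :
    ∑ i ∈ range N, cos (2 * π * M * (i / N)) = if N ∣ M then (N : ℝ) else 0 := by
  have hN' : (N : ℝ) ≠ 0 := Nat.cast_ne_zero.2 hN
  split_ifs with hdvd
  · obtain ⟨d, rfl⟩ := hdvd
    have hterm (i : ℕ) : cos (2 * π * ((N * d : ℕ) : ℝ) * (i / N)) = 1 := by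
      rw [show 2 * π * ((N * d : ℕ) : ℝ) * (i / N) = (d * i : ℕ) * (2 * π) by
        push_cast; field_simp]
      exact cos_nat_mul_two_pi _
    rw [sum_congr rfl fun i _ => hterm i, sum_const, card_range, nsmul_one]
  · have hangle : ∀ k : ℤ, 2 * π * M / N ≠ k * (2 * π) := by
      intro k hk
      have hMk : (M : ℝ) = N * k := by
        field_simp at hk
        linear_combination hk
      exact hdvd (Int.natCast_dvd_natCast.mp ⟨k, by exact_mod_cast hMk⟩)
    have hsum := sum_cos N hangle 0
    simp only [add_zero] at hsum
    rw [show N * (2 * π * M / N) / 2 = (M : ℕ) * π by field_simp, sin_nat_mul_pi, zero_mul,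
      zero_div] at hsum
    rw [← hsum]
    refine sum_congr rfl fun i _ => ?_
    congr 1
    ring

theorem integral_cos_two_pi_nat_mul {n : ℕ} (hn : n ≠ 0) :
    ∫ x in (0 : ℝ)..1, cos (2 * π * n * x) = 0 := by
  have hc : 2 * π * n ≠ 0 := by positivity
  rw [integral_comp_mul_left cos hc, integral_cos, mul_zero, mul_one,
    show 2 * π * n = (2 * n : ℕ) * π by push_cast; ring, sin_nat_mul_pi, sin_zero, sub_zero,
    smul_zero]

noncomputable def cosSeries (a : ℕ → ℝ) (ν : ℕ → ℕ) (x : ℝ) : ℝ :=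
  ∑' j, a j * cos (2 * π * ν j * x)

namespace cosSeries

variable {a : ℕ → ℝ} (ν : ℕ → ℕ)

theorem abs_term_le (j : ℕ) (x : ℝ) : |a j * cos (2 * π * ν j * x)| ≤ |a j| := by
  rw [abs_mul]
  exact mul_le_of_le_one_right (abs_nonneg _) (abs_cos_le_one _)

theorem summable_terms (ha : Summable fun j => |a j|) (x : ℝ) :
    Summable fun j => a j * cos (2 * π * ν j * x) :=
  .of_norm_bounded ha (abs_term_le ν · x)

theorem continuous (ha : Summable fun j => |a j|) : Continuous (cosSeries a ν) :=
  continuous_tsum (fun j => by fun_prop) ha (abs_term_le ν)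

theorem abs_le (ha : Summable fun j => |a j|) (x : ℝ) : |cosSeries a ν x| ≤ ∑' j, |a j| :=
  (norm_tsum_le_tsum_norm (summable_terms ν ha x).norm).trans
    ((summable_terms ν ha x).norm.tsum_le_tsum (abs_term_le ν · x) ha)

theorem integral_eq_zero (ha : Summable fun j => |a j|) (hν : ∀ j, ν j ≠ 0) :
    ∫ x in (0 : ℝ)..1, cosSeries a ν x = 0 := by
  have hsum := hasSum_integral_of_dominated_convergence (μ := MeasureTheory.volume)
    (F := fun j x => a j * cos (2 * π * ν j * x)) (f := cosSeries a ν) (a := 0) (b := 1)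
    (fun j _ => |a j|) (fun j => by fun_prop)
    (fun j => .of_forall fun x _ => abs_term_le ν j x) (.of_forall fun _ _ => ha)
    intervalIntegrable_const (.of_forall fun x _ => (summable_terms ν ha x).hasSum)
  simp only [integral_const_mul, integral_cos_two_pi_nat_mul (hν _), mul_zero] at hsum
  exact hsum.unique hasSum_zero

theorem riemannSum_eq (ha : Summable fun j => |a j|) {N : ℕ} (hN : N ≠ 0) :
    riemannSum (cosSeries a ν) N 1 0 = ∑' j, if N ∣ ν j then a j else 0 := by
  have hN' : (N : ℝ) ≠ 0 := Nat.cast_ne_zero.2 hN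
  have hnodes (j : ℕ) : ∑ i ∈ range N, a j * cos (2 * π * ν j * (i / N))
      = N * if N ∣ ν j then a j else 0 := by
    rw [← mul_sum, sum_range_cos_two_pi_mul_div N (ν j) hN]
    split_ifs <;> ring
  simp only [riemannSum, sub_zero, zero_add, mul_one, cosSeries]
  rw [← Summable.tsum_finsetSum fun i _ => summable_terms ν ha _, tsum_congr hnodes,
    tsum_mul_left, ← mul_assoc, one_div_mul_cancel hN', one_mul]

end cosSeries

section ErrorBounds

variable {q : ℝ → ℝ} {C : ℝ} {t s : ℝ}

theorem abs_riemannSum_le (hq : ∀ x, |q x| ≤ C) (n : ℕ) (hst : s ≤ t) :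
    |riemannSum q n t s| ≤ C * (t - s) := by
  have hC : 0 ≤ C := (abs_nonneg _).trans (hq 0)
  rcases n.eq_zero_or_pos with rfl | hn
  · simpa [riemannSum] using mul_nonneg hC (sub_nonneg.2 hst)
  have hsum : |∑ k ∈ range n, q (s + k * (t - s) / n)| ≤ n * C := by
    simpa using (abs_sum_le_sum_abs _ (range n)).trans
      (sum_le_sum fun k _ => hq (s + k * (t - s) / n))
  calc |riemannSum q n t s| = (t - s) / n * |∑ k ∈ range n, q (s + k * (t - s) / n)| := by
        rw [riemannSum, abs_mul, abs_of_nonneg (div_nonneg (sub_nonneg.2 hst) n.cast_nonneg)]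
    _ ≤ (t - s) / n * (n * C) := by gcongr
    _ = C * (t - s) := by field_simp

theorem abs_intError_le (hq : ∀ x, |q x| ≤ C) (n : ℕ) (hst : s ≤ t) :
    |intError q n t s| ≤ 2 * C * (t - s) := by
  have hint : |∫ y in s..t, q y| ≤ C * (t - s) := by
    simpa [abs_of_nonneg (sub_nonneg.2 hst)] using
      norm_integral_le_of_norm_le_const (a := s) (b := t) fun x _ =>
        (norm_eq_abs (q x)).trans_le (hq x)
  have hsum := abs_riemannSum_le hq n hst
  calc |intError q n t s| ≤ |∫ y in s..t, q y| + |riemannSum q n t s| := abs_sub _ _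
    _ ≤ 2 * C * (t - s) := by linarith

theorem abs_intError_le_supError (hq : ∀ x, |q x| ≤ C) (n : ℕ) (hs : 0 ≤ s) (hst : s ≤ t)
    (ht : t ≤ 1) : |intError q n t s| ≤ supError q n := by
  have hC : 0 ≤ C := (abs_nonneg _).trans (hq 0)
  refine le_ciSup (f := fun p : {p : ℝ × ℝ // 0 ≤ p.2 ∧ p.2 ≤ p.1 ∧ p.1 ≤ 1} =>
    |intError q n p.1.1 p.1.2|) ⟨2 * C, ?_⟩ ⟨(t, s), hs, hst, ht⟩
  rintro _ ⟨⟨⟨t', s'⟩, hs', hst', ht'⟩, rfl⟩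
  calc |intError q n t' s'| ≤ 2 * C * (t' - s') := abs_intError_le hq n hst'
    _ ≤ 2 * C * 1 := by gcongr; linarith
    _ = 2 * C := mul_one _

end ErrorBounds

noncomputable def lacunaryCos (m : ℕ → ℕ) : ℝ → ℝ :=
  cosSeries (fun j => 2⁻¹ ^ j) (fun j => 2 ^ m j)

namespace lacunaryCos

theorem summable_abs_coeff : Summable fun j : ℕ => |(2⁻¹ : ℝ) ^ j| := by
  simpa using summable_geometric_two

theorem continuous (m : ℕ → ℕ) : Continuous (lacunaryCos m) :=
  cosSeries.continuous _ summable_abs_coeff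

theorem abs_le_two (m : ℕ → ℕ) (x : ℝ) : |lacunaryCos m x| ≤ 2 := by
  calc |lacunaryCos m x| ≤ ∑' j : ℕ, |(2⁻¹ : ℝ) ^ j| := cosSeries.abs_le _ summable_abs_coeff x
    _ = 2 := by simp only [abs_pow, abs_inv, abs_two, tsum_geometric_inv_two]

theorem intError_eq {m : ℕ → ℕ} (hm : StrictMono m) (k : ℕ) :
    intError (lacunaryCos m) (2 ^ m k) 1 0 = -(2 * 2⁻¹ ^ k) := by
  have hdvd (j : ℕ) : 2 ^ m k ∣ 2 ^ m j ↔ k ≤ j := by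
    rw [Nat.pow_dvd_pow_iff_le_right one_lt_two, hm.le_iff_le]
  rw [intError, lacunaryCos,
    cosSeries.integral_eq_zero _ summable_abs_coeff fun j => by positivity,
    cosSeries.riemannSum_eq _ summable_abs_coeff (by positivity)]
  simp only [hdvd, tsum_geometric_inv_two_ge, zero_sub]

theorem two_mul_inv_two_pow_le_supError {m : ℕ → ℕ} (hm : StrictMono m) (k : ℕ) :
    2 * 2⁻¹ ^ k ≤ supError (lacunaryCos m) (2 ^ m k) := by
  simpa [intError_eq hm k] using
    abs_intError_le_supError (abs_le_two m) (2 ^ m k) le_rfl zero_le_one le_rfl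

end lacunaryCos

/-- For any prescribed rate `δ_n → 0`, `δ_n > 0`, there is a continuous function
`q : [0,1] → ℝ` whose uniform Riemann-sum error satisfies
`limsup_n (sup_{(t,s)∈Δ} |D_n(q;t,s)|)/δ_n = ∞`, i.e. it is `ω(δ_n)`. -/
theorem riemann_error_arbitrarily_slow (δ : ℕ → ℝ) (hδpos : ∀ n, 1 ≤ n → 0 < δ n)
    (hδ : Tendsto δ atTop (nhds 0)) :
    ∃ q : ℝ → ℝ, ContinuousOn q (Set.Icc (0 : ℝ) 1) ∧
      ∀ M : ℝ, ∃ᶠ n in atTop, M < supError q n / δ n := by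
  have hδ2 : Tendsto (fun i => δ (2 ^ i)) atTop (nhds 0) :=
    hδ.comp (tendsto_pow_atTop_atTop_of_one_lt one_lt_two)
  obtain ⟨m, hm, hδm⟩ := extraction_forall_of_eventually
    (P := fun k i => 2 ^ k * δ (2 ^ i) < 2 * 2⁻¹ ^ k) fun k =>
      (show Tendsto (fun i => 2 ^ k * δ (2 ^ i)) atTop (nhds 0) by
        simpa using hδ2.const_mul ((2 : ℝ) ^ k)).eventually_lt_const (by positivity)
  refine ⟨lacunaryCos m, (lacunaryCos.continuous m).continuousOn, fun M => ?_⟩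
  have hfreq : Tendsto (fun k => 2 ^ m k) atTop atTop :=
    (tendsto_pow_atTop_atTop_of_one_lt one_lt_two).comp hm.tendsto_atTop
  refine hfreq.frequently (Eventually.frequently ?_)
  filter_upwards [(tendsto_pow_atTop_atTop_of_one_lt (one_lt_two (α := ℝ))).eventually_gt_atTop M]
    with k hMk
  have hδk := hδpos (2 ^ m k) Nat.one_le_two_pow
  rw [lt_div_iff₀ hδk]
  calc M * δ (2 ^ m k) < 2 ^ k * δ (2 ^ m k) := by gcongr
    _ < 2 * 2⁻¹ ^ k := hδm k
    _ ≤ supError (lacunaryCos m) (2 ^ m k) := lacunaryCos.two_mul_inv_two_pow_le_supError hm k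
end

section
/- Let (δ_n)_{n≥1} be a sequence of positive real numbers with δ_n → 0 as n → ∞. Then there exists a continuous nonnegative function q : [0,1] → ℝ such that limsup_{n→∞} ( sup_{(t,s)∈Δ} |exp(−∫_s^t q(y) dy) − exp(−R_n(q;t,s))| ) / δ_n = ∞. -/
open intervalIntegral Finset Filter

/-- `sup_{(t,s) ∈ Δ} |exp(−∫_s^t q) − exp(−R_n(q;t,s))|`, the supremum of the exponential
error over the triangle `Δ = {(t,s) : 0 ≤ s ≤ t ≤ 1}`. -/
noncomputable def supExpError (q : ℝ → ℝ) (n : ℕ) : ℝ :=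
  ⨆ p : {p : ℝ × ℝ // 0 ≤ p.2 ∧ p.2 ≤ p.1 ∧ p.1 ≤ 1},
    |Real.exp (-(∫ y in p.1.2..p.1.1, q y)) - Real.exp (-(riemannSum q n p.1.1 p.1.2))|

/-! Take `q = ∑ᵢ 2⁻ⁱ sin²(2^{mᵢ} π x)` with `m` strictly increasing, so that `∫₀¹ q = 1`.
On the grid of mesh `2^{-m_l}` every term `i ≥ l` vanishes at all the nodes, while each term
`i < l` is summed exactly (its nodes pair up as `sin² + cos² = 1`), so `R_{2^{m_l}}(q;1,0) = 1 - 2⁻ˡ`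
and the exponential error at `(1,0)` is at least `e⁻¹ 2⁻ˡ`. The gaps of `m` are then chosen so that
`δ(2^{m_l}) < e⁻¹ 2⁻ˡ / (l + 1)`. -/

open Real

lemma sin_sq_add_nat_mul_pi (x : ℝ) (n : ℕ) : sin (x + n * π) ^ 2 = sin x ^ 2 := by
  rw [sin_add_nat_mul_pi, mul_pow, ← pow_mul, pow_mul', neg_one_sq, one_pow, one_mul]

lemma sum_range_sin_sq_pi_mul_div (N : ℕ) :
    ∑ k ∈ range (2 * N), sin (π * k / (2 * N)) ^ 2 = N := by
  rcases Nat.eq_zero_or_pos N with rfl | hN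
  · simp
  have shift : ∀ k : ℕ, sin (π * ((N + k : ℕ) : ℝ) / (2 * N)) ^ 2 = cos (π * k / (2 * N)) ^ 2 := by
    intro k
    have harg : π * ((N + k : ℕ) : ℝ) / (2 * N) = π * k / (2 * N) + π / 2 := by
      push_cast
      field_simp
      ring
    rw [harg, sin_add_pi_div_two]
  rw [two_mul, sum_range_add]
  simp only [shift, ← sum_add_distrib, sin_sq_add_cos_sq, sum_const, card_range, nsmul_one]

lemma sum_range_mul_sin_sq_pi_mul_div (c N : ℕ) :
    ∑ k ∈ range (c * (2 * N)), sin (π * k / (2 * N)) ^ 2 = c * N := by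
  induction c with
  | zero => simp
  | succ c ih =>
    rcases Nat.eq_zero_or_pos N with rfl | hN
    · simp
    have period : ∀ k : ℕ, sin (π * ((c * (2 * N) + k : ℕ) : ℝ) / (2 * N)) ^ 2
        = sin (π * k / (2 * N)) ^ 2 := by
      intro k
      have harg : π * ((c * (2 * N) + k : ℕ) : ℝ) / (2 * N) = π * k / (2 * N) + c * π := by
        push_cast
        field_simp
        ring
      rw [harg, sin_sq_add_nat_mul_pi]
    rw [add_one_mul, sum_range_add, ih]
    simp only [period, sum_range_sin_sq_pi_mul_div]
    push_cast
    ring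

lemma integral_sin_sq_nat_mul_pi {n : ℕ} (hn : n ≠ 0) :
    ∫ x in (0 : ℝ)..1, sin (n * π * x) ^ 2 = 1 / 2 := by
  have hnπ : (n : ℝ) * π ≠ 0 := by positivity
  rw [integral_comp_mul_left (fun y => sin y ^ 2) hnπ, integral_sin_sq, mul_one, mul_zero,
    sin_nat_mul_pi, sin_zero, smul_eq_mul]
  field_simp
  ring

lemma exp_mul_sub_le_exp_sub_exp (x y : ℝ) : exp x * (y - x) ≤ exp y - exp x := by
  have h := mul_le_mul_of_nonneg_left (add_one_le_exp (y - x)) (exp_pos x).le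
  rw [← exp_add, add_sub_cancel] at h
  linarith

lemma riemannSum_nonneg {q : ℝ → ℝ} (hq : ∀ x, 0 ≤ q x) (n : ℕ) {t s : ℝ} (hst : s ≤ t) :
    0 ≤ riemannSum q n t s :=
  mul_nonneg (div_nonneg (sub_nonneg.mpr hst) n.cast_nonneg) (sum_nonneg fun _ _ => hq _)

lemma riemannSum_tsum {ι : Type*} {f : ι → ℝ → ℝ} (hf : ∀ x, Summable fun i => f i x)
    (n : ℕ) (t s : ℝ) :
    riemannSum (fun x => ∑' i, f i x) n t s = ∑' i, riemannSum (f i) n t s := by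
  simp only [riemannSum, ← Summable.tsum_finsetSum fun _ _ => hf _, tsum_mul_left]

lemma riemannSum_sin_sq_two_pow (j M : ℕ) :
    riemannSum (fun x => sin (2 ^ j * π * x) ^ 2) (2 ^ M) 1 0 = if j < M then 1 / 2 else 0 := by
  simp only [riemannSum, sub_zero, zero_add, mul_one, Nat.cast_pow, Nat.cast_ofNat]
  split_ifs with hjM
  · obtain ⟨N, rfl⟩ := Nat.exists_eq_add_of_lt hjM
    have hsplit : 2 ^ (j + N + 1) = 2 ^ j * (2 * 2 ^ N) := by ring
    have arg : ∀ k : ℕ, 2 ^ j * π * (k / 2 ^ (j + N + 1)) = π * k / (2 * ((2 ^ N : ℕ) : ℝ)) := by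
      intro k
      push_cast
      field_simp
      ring
    simp only [arg]
    rw [hsplit, sum_range_mul_sin_sq_pi_mul_div]
    push_cast
    field_simp
    ring
  · have arg : ∀ k : ℕ, 2 ^ j * π * (k / 2 ^ M) = ((2 ^ (j - M) * k : ℕ) : ℝ) * π := by
      intro k
      have : (2 : ℝ) ^ j = 2 ^ M * 2 ^ (j - M) := by rw [← pow_add]; congr 1; omega
      push_cast
      rw [this]
      field_simp
    simp only [arg, sin_nat_mul_pi, ne_eq, OfNat.ofNat_ne_zero, not_false_eq_true, zero_pow,
      sum_const_zero, mul_zero]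

lemma riemannSum_const_mul (c : ℝ) (f : ℝ → ℝ) (n : ℕ) (t s : ℝ) :
    riemannSum (fun x => c * f x) n t s = c * riemannSum f n t s := by
  simp only [riemannSum, ← mul_sum]
  ring

lemma le_supExpError {q : ℝ → ℝ} (hq : ∀ x, 0 ≤ q x) (n : ℕ) {t s : ℝ} (hs : 0 ≤ s)
    (hst : s ≤ t) (ht : t ≤ 1) :
    |exp (-(∫ y in s..t, q y)) - exp (-(riemannSum q n t s))| ≤ supExpError q n := by
  refine le_ciSup (f := fun p : {p : ℝ × ℝ // 0 ≤ p.2 ∧ p.2 ≤ p.1 ∧ p.1 ≤ 1} =>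
    |exp (-(∫ y in p.1.2..p.1.1, q y)) - exp (-(riemannSum q n p.1.1 p.1.2))|) ⟨1, ?_⟩
    ⟨(t, s), hs, hst, ht⟩
  rintro _ ⟨⟨⟨t', s'⟩, -, hst', -⟩, rfl⟩
  have hI : 0 ≤ ∫ y in s'..t', q y := integral_nonneg hst' fun y _ => hq y
  have hR := riemannSum_nonneg hq n hst'
  exact abs_sub_le_of_nonneg_of_le (exp_pos _).le (exp_le_one_iff.mpr (by linarith))
    (exp_pos _).le (exp_le_one_iff.mpr (by linarith))

noncomputable def lacunarySinSq (m : ℕ → ℕ) (x : ℝ) : ℝ :=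
  ∑' i, (1 / 2 : ℝ) ^ i * sin (2 ^ m i * π * x) ^ 2

namespace lacunarySinSq

variable (m : ℕ → ℕ)

lemma norm_term_le (i : ℕ) (x : ℝ) :
    ‖(1 / 2 : ℝ) ^ i * sin (2 ^ m i * π * x) ^ 2‖ ≤ (1 / 2) ^ i := by
  rw [norm_mul, norm_pow, norm_pow, Real.norm_of_nonneg (by norm_num : (0:ℝ) ≤ 1 / 2),
    Real.norm_eq_abs, sq_abs]
  exact mul_le_of_le_one_right (by positivity) (sin_sq_le_one _)

lemma summable_term (x : ℝ) : Summable fun i => (1 / 2 : ℝ) ^ i * sin (2 ^ m i * π * x) ^ 2 :=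
  summable_geometric_two.of_norm_bounded (norm_term_le m · x)

end lacunarySinSq

lemma lacunarySinSq_nonneg (m : ℕ → ℕ) (x : ℝ) : 0 ≤ lacunarySinSq m x :=
  tsum_nonneg fun _ => by positivity

lemma continuous_lacunarySinSq (m : ℕ → ℕ) : Continuous (lacunarySinSq m) :=
  continuous_tsum (fun _ => by fun_prop) summable_geometric_two (lacunarySinSq.norm_term_le m)

lemma integral_lacunarySinSq (m : ℕ → ℕ) : ∫ x in (0 : ℝ)..1, lacunarySinSq m x = 1 := by
  have hsum : HasSum (fun i => ∫ x in (0 : ℝ)..1, (1 / 2 : ℝ) ^ i * sin (2 ^ m i * π * x) ^ 2)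
      (∫ x in (0 : ℝ)..1, lacunarySinSq m x) :=
    hasSum_integral_of_dominated_convergence (fun i _ => (1 / 2 : ℝ) ^ i)
      (fun i => (Continuous.aestronglyMeasurable (by fun_prop)))
      (fun i => MeasureTheory.ae_of_all _ fun x _ => lacunarySinSq.norm_term_le m i x)
      (MeasureTheory.ae_of_all _ fun _ _ => summable_geometric_two) intervalIntegrable_const
      (MeasureTheory.ae_of_all _ fun x _ => (lacunarySinSq.summable_term m x).hasSum)
  have hterm : ∀ i, ∫ x in (0 : ℝ)..1, (1 / 2 : ℝ) ^ i * sin (2 ^ m i * π * x) ^ 2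
      = (1 / 2) ^ i * (1 / 2) := fun i => by
    rw [integral_const_mul]
    congr 1
    exact_mod_cast integral_sin_sq_nat_mul_pi (pow_ne_zero (m i) two_ne_zero)
  simp only [hterm] at hsum
  refine hsum.unique ?_
  simpa using hasSum_geometric_two.mul_right (1 / 2 : ℝ)

lemma riemannSum_lacunarySinSq {m : ℕ → ℕ} (hm : StrictMono m) (l : ℕ) :
    riemannSum (lacunarySinSq m) (2 ^ m l) 1 0 = 1 - (1 / 2) ^ l := by
  have hterm : ∀ i, riemannSum (fun x => (1 / 2 : ℝ) ^ i * sin (2 ^ m i * π * x) ^ 2)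
      (2 ^ m l) 1 0 = if i < l then (1 / 2) ^ i * (1 / 2) else 0 := fun i => by
    rw [riemannSum_const_mul, riemannSum_sin_sq_two_pow]
    simp only [hm.lt_iff_lt, mul_ite, mul_zero]
  unfold lacunarySinSq
  rw [riemannSum_tsum (lacunarySinSq.summable_term m), tsum_congr hterm,
    tsum_eq_sum (s := range l) (fun i hi => if_neg (by simpa using hi)),
    sum_ite_of_true (fun i hi => mem_range.mp hi), ← sum_mul, geom_sum_eq (by norm_num)]
  ring

lemma exp_neg_one_mul_le_supExpError_lacunarySinSq {m : ℕ → ℕ} (hm : StrictMono m) (l : ℕ) :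
    exp (-1) * (1 / 2) ^ l ≤ supExpError (lacunarySinSq m) (2 ^ m l) := by
  have h := le_supExpError (lacunarySinSq_nonneg m) (2 ^ m l) le_rfl zero_le_one le_rfl
  rw [integral_lacunarySinSq, riemannSum_lacunarySinSq hm, abs_sub_comm] at h
  refine le_trans ?_ (le_abs_self _ |>.trans h)
  simpa using exp_mul_sub_le_exp_sub_exp (-1) (-(1 - (1 / 2) ^ l))

/-- For any prescribed rate `δ_n → 0`, `δ_n > 0`, there is a continuous nonnegative function
`q : [0,1] → ℝ` such that
`limsup_n (sup_{(t,s)∈Δ} |exp(−∫_s^t q) − exp(−R_n(q;t,s))|)/δ_n = ∞`. -/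
theorem exp_riemann_error_arbitrarily_slow (δ : ℕ → ℝ) (hδpos : ∀ n, 1 ≤ n → 0 < δ n)
    (hδ : Tendsto δ atTop (nhds 0)) :
    ∃ q : ℝ → ℝ, ContinuousOn q (Set.Icc (0 : ℝ) 1) ∧ (∀ x, 0 ≤ q x) ∧
      ∀ M : ℝ, ∃ᶠ n in atTop, M < supExpError q n / δ n := by
  have hpow : Tendsto (fun k : ℕ => 2 ^ k) atTop atTop :=
    tendsto_pow_atTop_atTop_of_one_lt one_lt_two
  obtain ⟨m, hm, hδm⟩ : ∃ m : ℕ → ℕ, StrictMono m ∧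
      ∀ l, δ (2 ^ m l) < exp (-1) * (1 / 2) ^ l / (l + 1) :=
    extraction_forall_of_eventually fun l => (hδ.comp hpow).eventually_lt_const (by positivity)
  refine ⟨lacunarySinSq m, (continuous_lacunarySinSq m).continuousOn, lacunarySinSq_nonneg m,
    fun M => ?_⟩
  have hratio : ∀ l : ℕ, (l : ℝ) + 1 < supExpError (lacunarySinSq m) (2 ^ m l) / δ (2 ^ m l) := by
    intro l
    have hpos := hδpos (2 ^ m l) Nat.one_le_two_pow
    rw [lt_div_iff₀ hpos]
    calc ((l : ℝ) + 1) * δ (2 ^ m l) < exp (-1) * (1 / 2) ^ l :=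
          (lt_div_iff₀' (by positivity)).mp (hδm l)
      _ ≤ _ := exp_neg_one_mul_le_supExpError_lacunarySinSq hm l
  refine (hpow.comp hm.tendsto_atTop).frequently (Eventually.frequently ?_)
  filter_upwards [eventually_ge_atTop ⌈M⌉₊] with l hl
  have : M ≤ l := (Nat.le_ceil M).trans (by exact_mod_cast hl)
  exact this.trans_lt ((lt_add_one _).trans (hratio l))
end

section
/- Let q : [0,1] → ℝ be bounded and Lebesgue-measurable, let n ≥ 1 be a natural number and let τ ∈ [0,1]. Suppose S and E are continuous linear operators on L²([0,1]) such that for every f ∈ L²([0,1]): (Sf)(t) = f(t − τ/n) for almost every t ∈ [τ/n, 1] and (Sf)(t) = 0 for almost every t ∈ [0, τ/n), and (Ef)(t) = exp(−(τ/n)·q(t))·f(t) for almost every t ∈ [0,1]. Then the n-fold composition (S∘E)^n satisfies, for every f ∈ L²([0,1]): ((S∘E)^n f)(t) = exp(−(τ/n)·Σ_{k=0}^{n−1} q(t − τ + k·τ/n))·f(t−τ) for almost every t ∈ [τ,1], and ((S∘E)^n f)(t) = 0 for almost every t ∈ [0,τ). (This is the explicit form of the Trotter product (e^{−τD₀/n}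 e^{−τQ/n})^n for the right-shift semigroup and the multiplication semigroup generated by q.) -/
open MeasureTheory Finset

/-- Lebesgue measure restricted to `[0,1]`. -/
noncomputable def mu01 : Measure ℝ := volume.restrict (Set.Icc (0 : ℝ) 1)

/-!
Both factors are weighted truncated right shifts of `L^p([0,1])`: `S` shifts by `τ/n` with
weight `1`, and `E` shifts by `0` with weight `exp (-(τ/n) q)`. Composing two such shifts adds
the shifts and multiplies the weights (the second weight being read at the shifted point), so
`(S ∘ E)^n` is the shift by `n · τ/n = τ` with weight `∏_{k<n} exp (-(τ/n) q (s + kτ/n))`,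
where `s = t - τ`.
-/

lemma ae_mu01_comp_sub {P : ℝ → Prop} (hP : ∀ᵐ t ∂mu01, P t) (b : ℝ) :
    ∀ᵐ t ∂mu01, t - b ∈ Set.Icc (0 : ℝ) 1 → P (t - b) := by
  rw [mu01, ae_restrict_iff' measurableSet_Icc] at hP
  exact ae_restrict_of_ae <|
    (measurePreserving_sub_right volume b).quasiMeasurePreserving.tendsto_ae.eventually hP

section WeightedRightShift

variable {p : ENNReal}

def IsWeightedRightShift (a : ℝ) (u : ℝ → ℝ) (T : Lp ℝ p mu01 → Lp ℝ p mu01) : Prop :=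
  ∀ g, (∀ᵐ t ∂mu01, t ∈ Set.Icc a 1 → T g t = u (t - a) * g (t - a)) ∧
    ∀ᵐ t ∂mu01, t ∈ Set.Ico 0 a → T g t = 0

lemma isWeightedRightShift_zero_of_mul {w : ℝ → ℝ} {E : Lp ℝ p mu01 → Lp ℝ p mu01}
    (hE : ∀ g, ∀ᵐ t ∂mu01, t ∈ Set.Icc (0 : ℝ) 1 → E g t = w t * g t) :
    IsWeightedRightShift 0 w E := fun g =>
  ⟨by simpa using hE g, by simp⟩

lemma isWeightedRightShift_one {h : ℝ} {S : Lp ℝ p mu01 → Lp ℝ p mu01}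
    (hS₁ : ∀ g, ∀ᵐ t ∂mu01, t ∈ Set.Icc h 1 → S g t = g (t - h))
    (hS₂ : ∀ g, ∀ᵐ t ∂mu01, t ∈ Set.Ico 0 h → S g t = 0) :
    IsWeightedRightShift h (fun _ => 1) S := fun g =>
  ⟨by simpa using hS₁ g, hS₂ g⟩

lemma IsWeightedRightShift.comp {a b : ℝ} {u v : ℝ → ℝ}
    {T U : Lp ℝ p mu01 → Lp ℝ p mu01} (ha : 0 ≤ a) (hb : 0 ≤ b)
    (hT : IsWeightedRightShift a u T) (hU : IsWeightedRightShift b v U) :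
    IsWeightedRightShift (a + b) (fun s => u s * v (s + a)) (U ∘ T) := by
  intro g
  obtain ⟨hU₁, hU₂⟩ := hU (T g)
  have hT₁ := ae_mu01_comp_sub (hT g).1 b
  have hT₂ := ae_mu01_comp_sub (hT g).2 b
  have hmem : ∀ᵐ t ∂mu01, t ∈ Set.Icc (0 : ℝ) 1 := ae_restrict_mem measurableSet_Icc
  constructor
  · filter_upwards [hU₁, hT₁, hmem] with t hU₁ hT₁ ht ⟨hat, ht1⟩
    rw [Function.comp_apply, hU₁ ⟨by linarith, ht1⟩,
      hT₁ ⟨by linarith, by linarith⟩ ⟨by linarith, by linarith⟩,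
      show t - b - a = t - (a + b) by ring, show t - (a + b) + a = t - b by ring]
    ring
  · filter_upwards [hU₁, hU₂, hT₂, hmem] with t hU₁ hU₂ hT₂ ht ⟨h0t, hta⟩
    rcases lt_or_ge t b with htb | htb
    · exact hU₂ ⟨h0t, htb⟩
    · rw [Function.comp_apply, hU₁ ⟨htb, ht.2⟩,
        hT₂ ⟨by linarith, by linarith [ht.2]⟩ ⟨by linarith, by linarith⟩, mul_zero]

lemma IsWeightedRightShift.iterate {h : ℝ} {w : ℝ → ℝ} {T : Lp ℝ p mu01 → Lp ℝ p mu01}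
    (hh : 0 ≤ h) (hT : IsWeightedRightShift h w T) (m : ℕ) :
    IsWeightedRightShift (m * h) (fun s => ∏ k ∈ range m, w (s + k * h)) T^[m] := by
  induction m with
  | zero => simpa using isWeightedRightShift_zero_of_mul (E := id) fun g => by simp
  | succ m ih =>
    rw [Function.iterate_succ']
    simpa [prod_range_succ, add_mul] using ih.comp (by positivity) hh hT

end WeightedRightShift

theorem trotter_product_explicit_form_general (q : ℝ → ℝ) (n : ℕ) (hn : 1 ≤ n)
    (τ : ℝ) (hτ0 : 0 ≤ τ)
    (S E : Lp ℝ 2 mu01 →L[ℝ] Lp ℝ 2 mu01)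
    (hS₁ : ∀ f : Lp ℝ 2 mu01,
      ∀ᵐ t ∂mu01, t ∈ Set.Icc (τ / n) 1 → (S f : ℝ → ℝ) t = (f : ℝ → ℝ) (t - τ / n))
    (hS₂ : ∀ f : Lp ℝ 2 mu01,
      ∀ᵐ t ∂mu01, t ∈ Set.Ico 0 (τ / n) → (S f : ℝ → ℝ) t = 0)
    (hE : ∀ f : Lp ℝ 2 mu01,
      ∀ᵐ t ∂mu01, t ∈ Set.Icc (0 : ℝ) 1 →
        (E f : ℝ → ℝ) t = Real.exp (-(τ / n) * q t) * (f : ℝ → ℝ) t) :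
    ∀ f : Lp ℝ 2 mu01,
      (∀ᵐ t ∂mu01, t ∈ Set.Icc τ 1 →
          ((S.comp E) ^ n) f t
            = Real.exp (-(τ / n) * ∑ k ∈ Finset.range n, q (t - τ + k * τ / n))
                * (f : ℝ → ℝ) (t - τ)) ∧
        (∀ᵐ t ∂mu01, t ∈ Set.Ico 0 τ → ((S.comp E) ^ n) f t = 0) := by
  have hh : 0 ≤ τ / n := by positivity
  have hSE : IsWeightedRightShift (τ / n) (fun s => Real.exp (-(τ / n) * q s)) (S ∘ E) := by
    simpa using
      (isWeightedRightShift_zero_of_mul hE).comp le_rfl hh (isWeightedRightShift_one hS₁ hS₂)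
  have hnτ : (n : ℝ) * (τ / n) = τ := by field_simp [Nat.cast_ne_zero.mpr (by omega : n ≠ 0)]
  have hweight : ∀ s, ∏ k ∈ range n, Real.exp (-(τ / n) * q (s + k * (τ / n)))
      = Real.exp (-(τ / n) * ∑ k ∈ range n, q (s + k * τ / n)) := by
    intro s
    simp only [← Real.exp_sum, mul_sum, mul_div_assoc]
  have hpow := hSE.iterate hh n
  simp only [hnτ, hweight] at hpow
  rwa [FunLike.coe_pow_eq_iterate, ContinuousLinearMap.coe_comp]

/-- **Explicit form of the Trotter product `(e^{−τD₀/n} e^{−τQ/n})^n` on `L²([0,1])`.**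
If `S` is the truncated right-shift by `τ/n` and `E` is multiplication by
`exp(−(τ/n) q(t))`, then `(S∘E)^n` is the weighted right-shift by `τ`:
`((S∘E)^n f)(t) = exp(−(τ/n) Σ_{k<n} q(t−τ+kτ/n)) f(t−τ)` for a.e. `t ∈ [τ,1]`, and
`((S∘E)^n f)(t) = 0` for a.e. `t ∈ [0,τ)`. -/
theorem trotter_product_explicit_form (q : ℝ → ℝ) (hq_meas : Measurable q)
    (M : ℝ) (hq_bdd : ∀ t, |q t| ≤ M) (n : ℕ) (hn : 1 ≤ n)
    (τ : ℝ) (hτ0 : 0 ≤ τ) (hτ1 : τ ≤ 1)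
    (S E : Lp ℝ 2 mu01 →L[ℝ] Lp ℝ 2 mu01)
    (hS₁ : ∀ f : Lp ℝ 2 mu01,
      ∀ᵐ t ∂mu01, t ∈ Set.Icc (τ / n) 1 → (S f : ℝ → ℝ) t = (f : ℝ → ℝ) (t - τ / n))
    (hS₂ : ∀ f : Lp ℝ 2 mu01,
      ∀ᵐ t ∂mu01, t ∈ Set.Ico 0 (τ / n) → (S f : ℝ → ℝ) t = 0)
    (hE : ∀ f : Lp ℝ 2 mu01,
      ∀ᵐ t ∂mu01, t ∈ Set.Icc (0 : ℝ) 1 →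
        (E f : ℝ → ℝ) t = Real.exp (-(τ / n) * q t) * (f : ℝ → ℝ) t) :
    ∀ f : Lp ℝ 2 mu01,
      (∀ᵐ t ∂mu01, t ∈ Set.Icc τ 1 →
          ((S.comp E) ^ n) f t
            = Real.exp (-(τ / n) * ∑ k ∈ Finset.range n, q (t - τ + k * τ / n))
                * (f : ℝ → ℝ) (t - τ)) ∧
        (∀ᵐ t ∂mu01, t ∈ Set.Ico 0 τ → ((S.comp E) ^ n) f t = 0) :=
  trotter_product_explicit_form_general q n hn τ hτ0 S E hS₁ hS₂ hE
end

section
/- Let q : [0,1] → ℝ be bounded, Lebesgue-measurable and nonnegative, let n ≥ 1 be a natural number and let τ ∈ (0,1]. Suppose S and E are continuous linear operators on L²([0,1]) such that for every f ∈ L²([0,1]): (Sf)(t) = f(t − τ/n) for almost every t ∈ [τ/n, 1] and (Sf)(t) = 0 for almost every t ∈ [0, τ/n), and (Ef)(t) = exp(−(τ/n)·q(t))·f(t) for almost every t ∈ [0,1]; and suppose W is a continuous linear operator on L²([0,1]) such that for every f: (Wf)(t) = exp(−∫_{t−τ}^{t} q(y) dy)·f(t−τ) for almost every t ∈ [τ,1]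 and (Wf)(t) = 0 for almost every t ∈ [0,τ). Then the operator norm of the difference equals the essential supremum of the scalar error: ‖W − (S∘E)^n‖ = ess sup_{t∈[τ,1]} | exp(−∫_{t−τ}^{t} q(y) dy) − exp(−(τ/n)·Σ_{k=0}^{n−1} q(t − τ + k·τ/n)) |. -/
/-!
Both `W` and `(S ∘ E)^n` shift by `τ` and then multiply: `W` by the exact propagator
`exp(-∫_{t-τ}^t q)`, and the Trotter product, by induction on the number of factors, by
`∏_k exp(-(τ/n) q(t - τ + kτ/n))`. Their difference is therefore the weighted shift
`f ↦ 1_{[τ,1]} · φ · f(· - τ)` whose weight `φ` is the scalar error. A weighted shift on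
`Lᵖ[0,1]` has norm `ess sup_{[τ,1]} |φ|`: translation carries `[0, 1-τ]` measure-preservingly onto
`[τ, 1]`, which gives `≤`, and the indicators of the translates of the level sets `{|φ| > c}`
give `≥`.
-/

open MeasureTheory Finset intervalIntegral

open Set Filter
open scoped ENNReal

/-- `ℝ` has no `⊥`, so the essential supremum over the zero measure is the junk value
`sInf univ = 0`. -/
lemma Real.essSup_measure_zero {α : Type*} [MeasurableSpace α] (f : α → ℝ) :
    essSup f (0 : Measure α) = 0 := by
  simp [essSup, limsup, limsSup]

lemma essSup_abs_nonneg {α : Type*} [MeasurableSpace α] {μ : Measure α} {φ : α → ℝ}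
    (hφ : IsBoundedUnder (· ≤ ·) (ae μ) fun t => |φ t|) :
    0 ≤ essSup (fun t => |φ t|) μ := by
  rcases eq_or_ne μ 0 with rfl | hμ
  · rw [Real.essSup_measure_zero]
  · have : (ae μ).NeBot := ae_neBot.mpr hμ
    exact le_limsup_of_frequently_le (Frequently.of_forall fun t => abs_nonneg _) hφ

lemma eLpNorm_comp_sub_le {E : Type*} [NormedAddCommGroup E] {g : ℝ → E} {p : ℝ≥0∞} {τ : ℝ}
    (hτ : 0 ≤ τ) (hg : AEStronglyMeasurable g mu01) :
    eLpNorm (fun t => g (t - τ)) p (volume.restrict (Icc τ 1)) ≤ eLpNorm g p mu01 := by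
  have hpres : MeasurePreserving (· - τ) (volume.restrict (Icc τ 1))
      (volume.restrict (Icc 0 (1 - τ))) := by
    have := (measurePreserving_sub_right volume τ).restrict_preimage
      (measurableSet_Icc (a := 0) (b := 1 - τ))
    rwa [preimage_sub_const_Icc, zero_add, sub_add_cancel] at this
  have hle : volume.restrict (Icc 0 (1 - τ)) ≤ mu01 :=
    Measure.restrict_mono (Set.Icc_subset_Icc le_rfl (by linarith)) le_rfl
  calc eLpNorm (fun t => g (t - τ)) p (volume.restrict (Icc τ 1))
      = eLpNorm g p (volume.restrict (Icc 0 (1 - τ))) :=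
        eLpNorm_comp_measurePreserving (hg.mono_measure hle) hpres
    _ ≤ eLpNorm g p mu01 := eLpNorm_mono_measure g hle

lemma mu01_restrict_Icc {τ : ℝ} (hτ : 0 ≤ τ) :
    mu01.restrict (Icc τ 1) = volume.restrict (Icc τ 1) := by
  rw [mu01, Measure.restrict_restrict measurableSet_Icc,
    inter_eq_left.mpr (Set.Icc_subset_Icc hτ le_rfl)]

lemma indicatorConstLp_comp_sub_ae_eq {E : Type*} [NormedAddCommGroup E] {p : ℝ≥0∞}
    {B : Set ℝ} (hB : MeasurableSet B) (hBfin : mu01 B ≠ ∞) (hB01 : B ⊆ Set.Icc 0 1) (τ : ℝ)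
    (x : E) : ∀ᵐ t, t - τ ∈ B → indicatorConstLp p hB hBfin x (t - τ) = x := by
  filter_upwards [(measurePreserving_sub_right volume τ).quasiMeasurePreserving.ae
    ((ae_restrict_iff' measurableSet_Icc).mp (indicatorConstLp_coeFn (p := p) (hs := hB)
      (hμs := hBfin) (c := x)))] with t ht htB
  rw [ht (hB01 htB), Set.indicator_of_mem htB]

def IsWeightedShift {p : ℝ≥0∞} [Fact (1 ≤ p)] (D : Lp ℝ p mu01 →L[ℝ] Lp ℝ p mu01) (τ : ℝ)
    (φ : ℝ → ℝ) : Prop :=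
  ∀ f : Lp ℝ p mu01, ⇑(D f) =ᵐ[mu01] (Icc τ 1).indicator fun t => φ t * f (t - τ)

namespace IsWeightedShift

variable {p : ℝ≥0∞} [Fact (1 ≤ p)] {D : Lp ℝ p mu01 →L[ℝ] Lp ℝ p mu01} {τ : ℝ} {φ : ℝ → ℝ}

lemma eLpNorm_apply (hD : IsWeightedShift D τ φ) (hτ : 0 ≤ τ) (f : Lp ℝ p mu01) :
    eLpNorm (D f) p mu01
      = eLpNorm (fun t => φ t * f (t - τ)) p (volume.restrict (Icc τ 1)) := by
  rw [eLpNorm_congr_ae (hD f), eLpNorm_indicator_eq_eLpNorm_restrict measurableSet_Icc,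
    mu01_restrict_Icc hτ]

lemma opNorm_le (hD : IsWeightedShift D τ φ) (hτ : 0 ≤ τ)
    (hφ : IsBoundedUnder (· ≤ ·) (ae (volume.restrict (Icc τ 1))) fun t => |φ t|) :
    ‖D‖ ≤ essSup (fun t => |φ t|) (volume.restrict (Icc τ 1)) := by
  set C := essSup (fun t => |φ t|) (volume.restrict (Icc τ 1))
  have hC : 0 ≤ C := essSup_abs_nonneg hφ
  refine D.opNorm_le_bound hC fun f => ?_
  have hle : eLpNorm (D f) p mu01 ≤ ENNReal.ofReal C * eLpNorm f p mu01 := by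
    rw [hD.eLpNorm_apply hτ f]
    calc _ ≤ ENNReal.ofReal C * eLpNorm (fun t => f (t - τ)) p (volume.restrict (Icc τ 1)) := by
          refine eLpNorm_le_mul_eLpNorm_of_ae_le_mul ?_ p
          filter_upwards [ae_le_essSup hφ] with t ht
          rw [norm_mul, Real.norm_eq_abs]
          exact mul_le_mul_of_nonneg_right ht (norm_nonneg _)
      _ ≤ _ := by gcongr; exact eLpNorm_comp_sub_le hτ (Lp.aestronglyMeasurable f)
  rw [Lp.norm_def, Lp.norm_def, ← ENNReal.toReal_ofReal hC, ← ENNReal.toReal_mul]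
  exact ENNReal.toReal_mono (ENNReal.mul_ne_top ENNReal.ofReal_ne_top (Lp.eLpNorm_ne_top f)) hle

lemma le_opNorm_of_le_abs (hD : IsWeightedShift D τ φ) (hτ : 0 ≤ τ) {A : Set ℝ}
    (hA : MeasurableSet A) (hAτ : A ⊆ Icc τ 1) (hA0 : volume A ≠ 0) {c : ℝ} (hc0 : 0 ≤ c)
    (hc : ∀ t ∈ A, c ≤ |φ t|) : c ≤ ‖D‖ := by
  have hp : p ≠ 0 := (zero_lt_one.trans_le Fact.out).ne'
  set B := (· + τ) ⁻¹' A
  have hB : MeasurableSet B := hA.preimage (measurable_add_const τ)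
  have hB01 : B ⊆ Icc 0 1 := fun s hs => by
    have := hAτ hs
    constructor <;> linarith [this.1, this.2]
  have hBA : mu01 B = volume A := by
    rw [mu01, Measure.restrict_apply hB, inter_eq_left.mpr hB01, measure_preimage_add_right]
  have hAfin : volume A ≠ ∞ := ((measure_mono hAτ).trans_lt measure_Icc_lt_top).ne
  have hBfin : mu01 B ≠ ∞ := hBA ▸ hAfin
  set f := indicatorConstLp p hB hBfin (1 : ℝ)
  have hf : ‖f‖ = volume.real A ^ (1 / p.toReal) := by
    rw [norm_indicatorConstLp' hp (hBA ▸ hA0), norm_one, one_mul, measureReal_def, hBA,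
      measureReal_def]
  have hDf : c * ‖f‖ ≤ ‖D f‖ := by
    have hle : eLpNorm (fun _ => c) p (volume.restrict A) ≤ eLpNorm (D f) p mu01 := by
      rw [hD.eLpNorm_apply hτ]
      refine (eLpNorm_mono_ae ?_).trans
        (eLpNorm_mono_measure _ (Measure.restrict_mono hAτ le_rfl))
      filter_upwards [ae_restrict_of_ae
          (indicatorConstLp_comp_sub_ae_eq (p := p) hB hBfin hB01 τ (1 : ℝ)),
        ae_restrict_mem hA] with t hft ht
      rw [hft (by simpa [B] using ht), mul_one, Real.norm_eq_abs, Real.norm_eq_abs,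
        abs_of_nonneg hc0]
      exact hc t ht
    rw [eLpNorm_const _ hp (by simpa using hA0), Measure.restrict_apply_univ] at hle
    have := ENNReal.toReal_mono (Lp.eLpNorm_ne_top _) hle
    rwa [ENNReal.toReal_mul, ← ENNReal.toReal_rpow, toReal_enorm, Real.norm_of_nonneg hc0,
      ← measureReal_def, ← hf, ← Lp.norm_def] at this
  have hfpos : 0 < ‖f‖ := by
    rw [hf]
    exact Real.rpow_pos_of_pos (ENNReal.toReal_pos hA0 hAfin) _
  exact le_of_mul_le_mul_right (hDf.trans (D.le_opNorm f)) hfpos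

lemma le_opNorm_of_lt_essSup (hD : IsWeightedShift D τ φ) (hτ : 0 ≤ τ) (hφ : Measurable φ)
    {c : ℝ} (hc : c < essSup (fun t => |φ t|) (volume.restrict (Icc τ 1))) : c ≤ ‖D‖ := by
  rcases lt_or_ge c 0 with hc0 | hc0
  · exact hc0.le.trans (norm_nonneg D)
  have hν : volume.restrict (Icc τ 1) ≠ 0 := by
    rintro hν
    rw [hν, Real.essSup_measure_zero] at hc
    linarith
  have : (ae (volume.restrict (Icc τ 1))).NeBot := ae_neBot.mpr hν
  have hlevel : MeasurableSet {t | c < |φ t|} := measurableSet_lt measurable_const hφ.abs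
  have hfreq := frequently_lt_of_lt_limsup
    (isCoboundedUnder_le_of_le _ fun t => abs_nonneg (φ t)) hc
  rw [frequently_ae_iff, Measure.restrict_apply hlevel, inter_comm] at hfreq
  exact hD.le_opNorm_of_le_abs hτ (measurableSet_Icc.inter hlevel) inter_subset_left hfreq hc0
    fun t ht => ht.2.le

theorem opNorm_eq (hD : IsWeightedShift D τ φ) (hτ : 0 ≤ τ) (hφm : Measurable φ)
    (hφ : IsBoundedUnder (· ≤ ·) (ae (volume.restrict (Icc τ 1))) fun t => |φ t|) :
    ‖D‖ = essSup (fun t => |φ t|) (volume.restrict (Icc τ 1)) :=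
  (hD.opNorm_le hτ hφ).antisymm
    (le_of_forall_lt_imp_le_of_dense fun _ hc => hD.le_opNorm_of_lt_essSup hτ hφm hc)

end IsWeightedShift

section ShiftMul

variable {p : ℝ≥0∞} [Fact (1 ≤ p)] {c : ℝ} {e : ℝ → ℝ} {S E : Lp ℝ p mu01 →L[ℝ] Lp ℝ p mu01}

lemma shift_comp_mul_pow_ae_eq (hc : 0 ≤ c)
    (hS₁ : ∀ f : Lp ℝ p mu01, ∀ᵐ t ∂mu01, t ∈ Icc c 1 → S f t = f (t - c))
    (hS₂ : ∀ f : Lp ℝ p mu01, ∀ᵐ t ∂mu01, t ∈ Ico 0 c → S f t = 0)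
    (hE : ∀ f : Lp ℝ p mu01, ∀ᵐ t ∂mu01, t ∈ Set.Icc (0 : ℝ) 1 → E f t = e t * f t)
    (m : ℕ) (f : Lp ℝ p mu01) :
    ∀ᵐ t, t ∈ Set.Icc (0 : ℝ) 1 → ((S.comp E) ^ m) f t =
      if m * c ≤ t then (∏ k ∈ range m, e (t - m * c + k * c)) * f (t - m * c) else 0 := by
  induction m with
  | zero => exact ae_of_all _ fun t ht => by simp [ht.1]
  | succ m ih =>
    set g := ((S.comp E) ^ m) f
    have hpow : ((S.comp E) ^ (m + 1)) f = S (E g) := by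
      rw [pow_succ']; rfl
    have hshift {P : ℝ → Prop} (h : ∀ᵐ t, P t) : ∀ᵐ t, P (t - c) :=
      (measurePreserving_sub_right volume c).quasiMeasurePreserving.ae h
    filter_upwards [(ae_restrict_iff' measurableSet_Icc).mp (hS₁ (E g)),
      (ae_restrict_iff' measurableSet_Icc).mp (hS₂ (E g)),
      hshift ((ae_restrict_iff' measurableSet_Icc).mp (hE g)), hshift ih]
      with t hSt hS₀t hEt hgt ht
    rw [hpow]
    rcases lt_or_ge t c with htc | htc
    · have hmc : ¬ ((m + 1 : ℕ) : ℝ) * c ≤ t := by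
        push_cast; nlinarith [(m.cast_nonneg : (0 : ℝ) ≤ m)]
      rw [hS₀t ht ⟨ht.1, htc⟩, if_neg hmc]
    have ht' : t - c ∈ Set.Icc (0 : ℝ) 1 := ⟨by linarith, by linarith [ht.2]⟩
    have hcond : (m : ℝ) * c ≤ t - c ↔ ((m + 1 : ℕ) : ℝ) * c ≤ t := by
      push_cast; constructor <;> intro h <;> linarith
    have harg : t - c - m * c = t - ((m + 1 : ℕ) : ℝ) * c := by push_cast; ring
    have hlast : t - ((m + 1 : ℕ) : ℝ) * c + m * c = t - c := by push_cast; ring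
    rw [hSt ht ⟨htc, ht.2⟩, hEt ht' ht', hgt ht', harg]
    simp only [hcond]
    split_ifs
    · rw [prod_range_succ, hlast]; ring
    · rw [mul_zero]

lemma isWeightedShift_sub_shift_comp_mul_pow (hc : 0 ≤ c) {n : ℕ} {s : ℝ} (hnc : n * c = s)
    (hS₁ : ∀ f : Lp ℝ p mu01, ∀ᵐ t ∂mu01, t ∈ Icc c 1 → S f t = f (t - c))
    (hS₂ : ∀ f : Lp ℝ p mu01, ∀ᵐ t ∂mu01, t ∈ Ico 0 c → S f t = 0)
    (hE : ∀ f : Lp ℝ p mu01, ∀ᵐ t ∂mu01, t ∈ Set.Icc (0 : ℝ) 1 → E f t = e t * f t)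
    {w : ℝ → ℝ} {W : Lp ℝ p mu01 →L[ℝ] Lp ℝ p mu01}
    (hW₁ : ∀ f : Lp ℝ p mu01, ∀ᵐ t ∂mu01, t ∈ Icc s 1 → W f t = w t * f (t - s))
    (hW₂ : ∀ f : Lp ℝ p mu01, ∀ᵐ t ∂mu01, t ∈ Ico 0 s → W f t = 0) :
    IsWeightedShift (W - (S.comp E) ^ n) s fun t => w t - ∏ k ∈ range n, e (t - s + k * c) := by
  intro f
  filter_upwards [hW₁ f, hW₂ f,
    (ae_restrict_iff' measurableSet_Icc).mpr (shift_comp_mul_pow_ae_eq hc hS₁ hS₂ hE n f),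
    Lp.coeFn_sub (W f) _, ae_restrict_mem measurableSet_Icc] with t hW₁t hW₂t hpow hsub ht
  rw [sub_apply, hsub, Pi.sub_apply, hpow, hnc]
  by_cases hst : s ≤ t
  · have hts : t ∈ Icc s 1 := ⟨hst, ht.2⟩
    rw [hW₁t hts, if_pos hst, Set.indicator_of_mem hts]
    ring
  · rw [hW₂t ⟨ht.1, not_le.mp hst⟩, if_neg hst, Set.indicator_of_notMem fun h => hst h.1,
      sub_zero]

end ShiftMul

lemma abs_exp_sub_exp_le_one {a b : ℝ} (ha : a ≤ 0) (hb : b ≤ 0) :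
    |Real.exp a - Real.exp b| ≤ 1 :=
  abs_sub_le_iff.mpr ⟨by linarith [Real.exp_le_one_iff.mpr ha, Real.exp_pos b],
    by linarith [Real.exp_le_one_iff.mpr hb, Real.exp_pos a]⟩

lemma continuous_movingIntegral {q : ℝ → ℝ} (hq : ∀ a b, IntervalIntegrable q volume a b)
    (τ : ℝ) : Continuous fun t => ∫ y in (t - τ)..t, q y := by
  have hprim := intervalIntegral.continuous_primitive hq 0
  have hsplit : (fun t => ∫ y in (t - τ)..t, q y)
      = fun t => (∫ y in (0 : ℝ)..t, q y) - ∫ y in (0 : ℝ)..(t - τ), q y :=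
    funext fun t => (integral_interval_sub_left (hq 0 t) (hq 0 (t - τ))).symm
  rw [hsplit]
  exact hprim.sub (hprim.comp (continuous_sub_right τ))

theorem trotter_opNorm_eq_scalar_error_general (q : ℝ → ℝ) (hq_meas : Measurable q)
    (M : ℝ) (hq_bdd : ∀ t, |q t| ≤ M) (hq_nonneg : ∀ t, 0 ≤ q t)
    (n : ℕ) (hn : 1 ≤ n) (τ : ℝ) (hτ0 : 0 < τ)
    (S E W : Lp ℝ 2 mu01 →L[ℝ] Lp ℝ 2 mu01)
    (hS₁ : ∀ f : Lp ℝ 2 mu01,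
      ∀ᵐ t ∂mu01, t ∈ Set.Icc (τ / n) 1 → (S f : ℝ → ℝ) t = (f : ℝ → ℝ) (t - τ / n))
    (hS₂ : ∀ f : Lp ℝ 2 mu01,
      ∀ᵐ t ∂mu01, t ∈ Set.Ico 0 (τ / n) → (S f : ℝ → ℝ) t = 0)
    (hE : ∀ f : Lp ℝ 2 mu01,
      ∀ᵐ t ∂mu01, t ∈ Set.Icc (0 : ℝ) 1 →
        (E f : ℝ → ℝ) t = Real.exp (-(τ / n) * q t) * (f : ℝ → ℝ) t)
    (hW₁ : ∀ f : Lp ℝ 2 mu01,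
      ∀ᵐ t ∂mu01, t ∈ Set.Icc τ 1 →
        (W f : ℝ → ℝ) t = Real.exp (-(∫ y in (t - τ)..t, q y)) * (f : ℝ → ℝ) (t - τ))
    (hW₂ : ∀ f : Lp ℝ 2 mu01,
      ∀ᵐ t ∂mu01, t ∈ Set.Ico 0 τ → (W f : ℝ → ℝ) t = 0) :
    ‖W - (S.comp E) ^ n‖
      = essSup
          (fun t =>
            |Real.exp (-(∫ y in (t - τ)..t, q y))
              - Real.exp (-(τ / n) * ∑ k ∈ Finset.range n, q (t - τ + k * τ / n))|)
          (volume.restrict (Set.Icc τ 1)) := by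
  have hn' : (0 : ℝ) < n := by exact_mod_cast hn
  have hc : 0 < τ / n := div_pos hτ0 hn'
  have hD := isWeightedShift_sub_shift_comp_mul_pow hc.le (mul_div_cancel₀ τ hn'.ne')
    hS₁ hS₂ hE hW₁ hW₂
  have hprod (t : ℝ) : ∏ k ∈ range n, Real.exp (-(τ / n) * q (t - τ + k * (τ / n)))
      = Real.exp (-(τ / n) * ∑ k ∈ range n, q (t - τ + k * τ / n)) := by
    rw [← Real.exp_sum, ← Finset.mul_sum]
    simp only [mul_div_assoc]
  simp_rw [hprod] at hD
  have hq : ∀ a b, IntervalIntegrable q volume a b := fun a b =>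
    (intervalIntegrable_const (c := M)).mono_fun hq_meas.aestronglyMeasurable
      (ae_of_all _ fun t => (hq_bdd t).trans (le_abs_self M))
  have hmeas : Measurable fun t => Real.exp (-(∫ y in (t - τ)..t, q y))
      - Real.exp (-(τ / n) * ∑ k ∈ range n, q (t - τ + k * τ / n)) := by
    have := (continuous_movingIntegral hq τ).measurable
    fun_prop
  have hbdd (t : ℝ) : |Real.exp (-(∫ y in (t - τ)..t, q y))
      - Real.exp (-(τ / n) * ∑ k ∈ range n, q (t - τ + k * τ / n))| ≤ 1 :=
    abs_exp_sub_exp_le_one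
      (neg_nonpos.mpr (integral_nonneg (by linarith) fun y _ => hq_nonneg y))
      (mul_nonpos_of_nonpos_of_nonneg (neg_nonpos.mpr hc.le)
        (sum_nonneg fun k _ => hq_nonneg _))
  exact hD.opNorm_eq hτ0.le hmeas (isBoundedUnder_of ⟨1, hbdd⟩)

/-- **Operator-norm Trotter error = scalar approximation error.**
Let `S` be the truncated right-shift by `τ/n`, `E` multiplication by `exp(−(τ/n)q(t))`,
and `W` the evolution semigroup `(Wf)(t) = exp(−∫_{t−τ}^t q) f(t−τ)` on `L²([0,1])`.
Then `‖W − (S∘E)^n‖` equals the essential supremum over `t ∈ [τ,1]` of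
`|exp(−∫_{t−τ}^t q) − exp(−(τ/n) Σ_{k<n} q(t−τ+kτ/n))|`. -/
theorem trotter_opNorm_eq_scalar_error (q : ℝ → ℝ) (hq_meas : Measurable q)
    (M : ℝ) (hq_bdd : ∀ t, |q t| ≤ M) (hq_nonneg : ∀ t, 0 ≤ q t)
    (n : ℕ) (hn : 1 ≤ n) (τ : ℝ) (hτ0 : 0 < τ) (hτ1 : τ ≤ 1)
    (S E W : Lp ℝ 2 mu01 →L[ℝ] Lp ℝ 2 mu01)
    (hS₁ : ∀ f : Lp ℝ 2 mu01,
      ∀ᵐ t ∂mu01, t ∈ Set.Icc (τ / n) 1 → (S f : ℝ → ℝ) t = (f : ℝ → ℝ) (t - τ / n))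
    (hS₂ : ∀ f : Lp ℝ 2 mu01,
      ∀ᵐ t ∂mu01, t ∈ Set.Ico 0 (τ / n) → (S f : ℝ → ℝ) t = 0)
    (hE : ∀ f : Lp ℝ 2 mu01,
      ∀ᵐ t ∂mu01, t ∈ Set.Icc (0 : ℝ) 1 →
        (E f : ℝ → ℝ) t = Real.exp (-(τ / n) * q t) * (f : ℝ → ℝ) t)
    (hW₁ : ∀ f : Lp ℝ 2 mu01,
      ∀ᵐ t ∂mu01, t ∈ Set.Icc τ 1 →
        (W f : ℝ → ℝ) t = Real.exp (-(∫ y in (t - τ)..t, q y)) * (f : ℝ → ℝ) (t - τ))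
    (hW₂ : ∀ f : Lp ℝ 2 mu01,
      ∀ᵐ t ∂mu01, t ∈ Set.Ico 0 τ → (W f : ℝ → ℝ) t = 0) :
    ‖W - (S.comp E) ^ n‖
      = essSup
          (fun t =>
            |Real.exp (-(∫ y in (t - τ)..t, q y))
              - Real.exp (-(τ / n) * ∑ k ∈ Finset.range n, q (t - τ + k * τ / n))|)
          (volume.restrict (Set.Icc τ 1)) :=
  trotter_opNorm_eq_scalar_error_general q hq_meas M hq_bdd hq_nonneg n hn τ hτ0 S E W hS₁ hS₂ hE
    hW₁ hW₂
end
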